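/- arXiv:1703.05001 — 3 statements merged into one kernel-verified Lean document; each statement's English description precedes it below -/
import Mathlib

section
/- In the setting of Theorem 3.9: let x⁰, x¹, … be a PPA sequence converging to a KKT point x̄ at which strict complementarity holds, S = A_m(x̄), λ̄_1 ≥ ⋯ ≥ λ̄_s the eigenvalues of Q_{SS} with orthonormal eigenvectors v̄_1, …, v̄_s, and N such that for every k ≥ N the active sets of x^k coincide with those of x̄. Assume v̄_sᵀ((x^{N+1} − x^N)|_S) ≠ 0 and that the smallest eigenvalue is simple, λ̄_{s−1} > λ̄_s. Then (x^{k+1} − x^k)|_S ≠ 0 for all k ≥ N, and there is a sign σ ∈ {1, −1} such that ((x^{k+1} − x^k)|_S)/‖(x^{k+1} − x^k)|_S‖ → σ v̄_s as k → ∞. (Theorem 3.9, second part.) -/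
open Matrix Filter Topology

/-- Euclidean norm of a finitely-indexed real vector. -/
noncomputable def vnorm {ι : Type*} [Fintype ι] (v : ι → ℝ) : ℝ :=
  Real.sqrt (v ⬝ᵥ v)

/-- Membership in the (possibly unbounded) box `Ω = {x | l ≤ x ≤ u}`,
with extended-real bounds. -/
def inBox {n : ℕ} (l u : Fin n → EReal) (x : Fin n → ℝ) : Prop :=
  ∀ j, l j ≤ (x j : EReal) ∧ (x j : EReal) ≤ u j

/-- The quadratic objective `q(x) = ½ xᵀQx + rᵀx`. -/
noncomputable def qf {n : ℕ} (Q : Matrix (Fin n) (Fin n) ℝ) (r : Fin n → ℝ)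
    (x : Fin n → ℝ) : ℝ :=
  (1 / 2) * (x ⬝ᵥ Q *ᵥ x) + r ⬝ᵥ x

/-- `xbar` is a KKT point at which the strict complementarity conditions hold. -/
def kktStrict {n : ℕ} (l u : Fin n → EReal) (Q : Matrix (Fin n) (Fin n) ℝ)
    (r : Fin n → ℝ) (xbar : Fin n → ℝ) : Prop :=
  ∀ j, ((xbar j : EReal) = l j → 0 < (Q *ᵥ xbar + r) j) ∧
    (l j < (xbar j : EReal) ∧ (xbar j : EReal) < u j → (Q *ᵥ xbar + r) j = 0) ∧
    ((xbar j : EReal) = u j → (Q *ᵥ xbar + r) j < 0)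

/- ### Auxiliary lemmas -/

lemma dot_self_nonneg' {ι : Type*} [Fintype ι] (w : ι → ℝ) : 0 ≤ w ⬝ᵥ w :=
  Finset.sum_nonneg fun i _ => mul_self_nonneg (w i)

lemma vnorm_sq {ι : Type*} [Fintype ι] (w : ι → ℝ) : vnorm w ^ 2 = w ⬝ᵥ w := by
  rw [vnorm, Real.sq_sqrt (dot_self_nonneg' w)]

lemma lin_quad_zero (a c ε : ℝ) (hε : 0 < ε)
    (h : ∀ t : ℝ, |t| < ε → 0 ≤ a * t + c * t ^ 2) : a = 0 := by
  by_contra ha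
  have hapos : 0 < |a| := abs_pos.mpr ha
  set m : ℝ := min (ε / 2) (|a| / (2 * (|c| + 1))) with hm'
  set t : ℝ := -(a / |a|) * m with ht
  have hm : 0 < m := lt_min (by linarith) (by positivity)
  have habs : |t| = m := by
    rw [ht, abs_mul, abs_neg, abs_div, abs_abs, div_self (ne_of_gt hapos), one_mul,
      abs_of_pos hm]
  have h1 : |t| < ε := by rw [habs]; exact lt_of_le_of_lt (min_le_left _ _) (by linarith)
  have h2 := h t h1
  have haa : a * a = |a| * |a| := (abs_mul_abs_self a).symm
  have hdd : |a| * |a| / |a| = |a| := by field_simp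
  have hat : a * t = -(|a| * |t|) := by
    rw [habs, ht]
    calc a * (-(a / |a|) * m) = -(a * a / |a| * m) := by ring
      _ = -(|a| * |a| / |a| * m) := by rw [haa]
      _ = -(|a| * m) := by rw [hdd]
  have hct : c * t ^ 2 ≤ |c| * |t| * |t| := by
    calc c * t ^ 2 ≤ |c * t ^ 2| := le_abs_self _
      _ = |c| * |t| * |t| := by rw [abs_mul, sq, abs_mul]; ring
  have h3 : |t| ≤ |a| / (2 * (|c| + 1)) := by rw [habs]; exact min_le_right _ _
  have h4 : |c| * |t| ≤ |a| / 2 := by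
    have hc1 : |c| ≤ |c| + 1 := by linarith
    calc |c| * |t| ≤ (|c|+1) * (|a| / (2 * (|c| + 1))) := by
          apply mul_le_mul hc1 h3 (abs_nonneg _) (by positivity)
      _ = |a| / 2 := by field_simp
  have htpos : 0 < |t| := by rw [habs]; exact hm
  nlinarith [h2, hat, hct, h4, htpos]

lemma ereal_lt_nbhd_lower (e : EReal) (x : ℝ) (h : e < (x : EReal)) :
    ∃ δ : ℝ, 0 < δ ∧ ∀ y : ℝ, |y - x| < δ → e < (y : EReal) := by
  induction e using EReal.rec with
  | bot => exact ⟨1, one_pos, fun y _ => bot_lt_iff_ne_bot.mpr (EReal.coe_ne_bot y)⟩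
  | coe a =>
      refine ⟨x - a, by exact_mod_cast sub_pos.mpr (EReal.coe_lt_coe_iff.mp h), fun y hy => ?_⟩
      have := abs_lt.mp hy
      exact_mod_cast show a < y by linarith [this.1]
  | top => exact absurd h (not_top_lt)

lemma ereal_lt_nbhd_upper (e : EReal) (x : ℝ) (h : (x : EReal) < e) :
    ∃ δ : ℝ, 0 < δ ∧ ∀ y : ℝ, |y - x| < δ → (y : EReal) < e := by
  induction e using EReal.rec with
  | bot => exact absurd h (not_lt_bot)
  | coe a =>
      refine ⟨a - x, by exact_mod_cast sub_pos.mpr (EReal.coe_lt_coe_iff.mp h), fun y hy => ?_⟩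
      have := abs_lt.mp hy
      exact_mod_cast show y < a by linarith [this.2]
  | top => exact ⟨1, one_pos, fun y _ => lt_top_iff_ne_top.mpr (EReal.coe_ne_top y)⟩

lemma dot_symm {n : ℕ} (Q : Matrix (Fin n) (Fin n) ℝ) (hQ : Q.IsSymm)
    (a b : Fin n → ℝ) : a ⬝ᵥ Q *ᵥ b = b ⬝ᵥ Q *ᵥ a := by
  rw [dotProduct_mulVec, ← mulVec_transpose, hQ.eq, dotProduct_comm]

lemma dot_symm' {ι : Type*} [Fintype ι] [DecidableEq ι] (Q : Matrix ι ι ℝ) (hQ : Q.IsSymm)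
    (a b : ι → ℝ) : a ⬝ᵥ Q *ᵥ b = b ⬝ᵥ Q *ᵥ a := by
  rw [dotProduct_mulVec, ← mulVec_transpose, hQ.eq, dotProduct_comm]

lemma qf_expand {n : ℕ} (Q : Matrix (Fin n) (Fin n) ℝ) (hQ : Q.IsSymm) (r : Fin n → ℝ)
    (y : Fin n → ℝ) (j : Fin n) (t : ℝ) :
    qf Q r (y + t • (Pi.single j 1 : Fin n → ℝ)) =
      qf Q r y + t * ((Q *ᵥ y) j + r j) + t ^ 2 * Q j j / 2 := by
  have h1 : Pi.single j (1:ℝ) ⬝ᵥ Q *ᵥ y = (Q *ᵥ y) j := by simp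
  have h2 : y ⬝ᵥ Q *ᵥ Pi.single j 1 = (Q *ᵥ y) j := by
    rw [dot_symm Q hQ]; exact h1
  have h3 : Pi.single j (1:ℝ) ⬝ᵥ Q *ᵥ Pi.single j 1 = Q j j := by
    simp [mulVec_single]
  have h4 : r ⬝ᵥ Pi.single j (1:ℝ) = r j := by simp
  simp only [qf, mulVec_add, mulVec_smul, dotProduct_add, add_dotProduct,
    dotProduct_smul, smul_dotProduct, smul_eq_mul, h1, h2, h3, h4]
  ring

lemma dot_expand {n : ℕ} (w : Fin n → ℝ) (j : Fin n) (t : ℝ) :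
    (w + t • (Pi.single j 1 : Fin n → ℝ)) ⬝ᵥ (w + t • (Pi.single j 1 : Fin n → ℝ)) =
      w ⬝ᵥ w + 2 * t * w j + t ^ 2 := by
  have h1 : Pi.single j (1:ℝ) ⬝ᵥ w = w j := by simp
  have h2 : w ⬝ᵥ Pi.single j (1:ℝ) = w j := by simp
  have h3 : Pi.single j (1:ℝ) ⬝ᵥ Pi.single j (1:ℝ) = 1 := by simp
  simp only [dotProduct_add, add_dotProduct, dotProduct_smul, smul_dotProduct,
    smul_eq_mul, h1, h2, h3]
  ring

lemma vnorm_smul_abs {ι : Type*} [Fintype ι] (c : ℝ) (w : ι → ℝ) :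
    vnorm (c • w) = |c| * vnorm w := by
  have : (c • w) ⬝ᵥ (c • w) = c ^ 2 * (w ⬝ᵥ w) := by
    simp [dotProduct_smul, smul_dotProduct, smul_eq_mul]; ring
  rw [vnorm, this, vnorm, Real.sqrt_mul (sq_nonneg c), Real.sqrt_sq_eq_abs]

lemma vnorm_smul_pos {ι : Type*} [Fintype ι] (c : ℝ) (hc : 0 ≤ c) (w : ι → ℝ) :
    vnorm (c • w) = c * vnorm w := by
  rw [vnorm_smul_abs, abs_of_nonneg hc]

lemma normalize_smul_pos {ι : Type*} [Fintype ι] (c : ℝ) (hc : 0 < c) (w : ι → ℝ) :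
    (vnorm (c • w))⁻¹ • (c • w) = (vnorm w)⁻¹ • w := by
  rw [vnorm_smul_pos c hc.le w, mul_inv, smul_smul]
  congr 1
  rw [mul_comm c⁻¹, mul_assoc, inv_mul_cancel₀ hc.ne', mul_one]

lemma vnorm_continuous {ι : Type*} [Fintype ι] : Continuous (vnorm (ι := ι)) := by
  apply Real.continuous_sqrt.comp
  exact continuous_finset_sum _ fun i _ => (continuous_apply i).mul (continuous_apply i)

lemma dot_sum_smul {κ ι : Type*} [Fintype κ] [Fintype ι] [DecidableEq κ]
    (v : κ → ι → ℝ) (hortho : ∀ i i', v i ⬝ᵥ v i' = if i = i' then (1:ℝ) else 0)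
    (i : κ) (g : κ → ℝ) : v i ⬝ᵥ (∑ j, g j • v j) = g i := by
  have h1 : v i ⬝ᵥ (∑ j, g j • v j) = ∑ j, g j * (v i ⬝ᵥ v j) := by
    simp only [dotProduct, Finset.sum_apply, Pi.smul_apply, smul_eq_mul, Finset.mul_sum]
    rw [Finset.sum_comm]
    exact Finset.sum_congr rfl fun j _ => Finset.sum_congr rfl fun a _ => by ring
  rw [h1]
  simp [hortho]

lemma ortho_expand {κ ι : Type*} [Fintype κ] [Fintype ι] [DecidableEq κ] [Nonempty κ]
    (v : κ → ι → ℝ) (hortho : ∀ i i', v i ⬝ᵥ v i' = if i = i' then (1:ℝ) else 0)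
    (hcard : Fintype.card κ = Fintype.card ι) (w : ι → ℝ) :
    w = ∑ i, (v i ⬝ᵥ w) • v i := by
  have hli : LinearIndependent ℝ v := by
    rw [Fintype.linearIndependent_iff]
    intro g hg i
    have := dot_sum_smul v hortho i g
    rw [hg] at this
    simpa using this.symm
  have hfr : Fintype.card κ = Module.finrank ℝ (ι → ℝ) := by
    rw [Module.finrank_fintype_fun_eq_card, hcard]
  let hb := basisOfLinearIndependentOfCardEqFinrank hli hfr
  have hcoe : ⇑hb = v := coe_basisOfLinearIndependentOfCardEqFinrank hli hfr
  have hw : ∑ j, hb.repr w j • v j = w := by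
    have := hb.sum_repr w
    rwa [hcoe] at this
  have hc : ∀ i, v i ⬝ᵥ w = hb.repr w i := by
    intro i
    conv_lhs => rw [← hw]
    exact dot_sum_smul v hortho i _
  simp_rw [hc]
  exact hw.symm

lemma sum_restrict {n : ℕ} (S : Finset (Fin n)) (g : Fin n → ℝ)
    (hg : ∀ j, j ∉ S → g j = 0) :
    ∑ j : Fin n, g j = ∑ j : {j // j ∈ S}, g j.1 := by
  rw [Finset.sum_coe_sort S g]
  symm
  apply Finset.sum_subset (Finset.subset_univ S)
  intro j _ hj
  exact hg j hj

lemma quad_restrict_pos {n : ℕ} (S : Finset (Fin n)) (M : Matrix (Fin n) (Fin n) ℝ)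
    (hpd : M.PosDef) (w : {j // j ∈ S} → ℝ) (hw : w ≠ 0) :
    0 < w ⬝ᵥ ((M.submatrix (Subtype.val : {j // j ∈ S} → Fin n) Subtype.val) *ᵥ w) := by
  classical
  set W : Fin n → ℝ := fun j => if h : j ∈ S then w ⟨j, h⟩ else 0 with hWdef
  have hWS : ∀ i : {j // j ∈ S}, W i.1 = w i := by
    intro i
    simp only [hWdef, dif_pos i.2]
  have hWoff : ∀ j, j ∉ S → W j = 0 := by
    intro j hj; simp only [hWdef, dif_neg hj]
  have hWne : W ≠ 0 := by
    obtain ⟨i0, hi0⟩ := Function.ne_iff.mp hw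
    intro hzero
    apply hi0
    have := congrFun hzero i0.1
    rw [hWS i0] at this
    simpa using this
  have hmain := hpd.dotProduct_mulVec_pos hWne
  rw [show star W = W from star_trivial W] at hmain
  have hMW : ∀ j : Fin n, (M *ᵥ W) j = ∑ i : {i // i ∈ S}, M j i.1 * w i := by
    intro j
    show ∑ i, M j i * W i = _
    rw [sum_restrict S (fun i => M j i * W i)
      (fun i hi => by show M j i * W i = 0; rw [hWoff i hi, mul_zero])]
    exact Finset.sum_congr rfl fun i _ => by rw [hWS i]
  have key : W ⬝ᵥ (M *ᵥ W) =
      w ⬝ᵥ ((M.submatrix (Subtype.val : {j // j ∈ S} → Fin n) Subtype.val) *ᵥ w) := by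
    show ∑ j, W j * (M *ᵥ W) j = ∑ j : {j // j ∈ S}, w j * _
    rw [sum_restrict S (fun j => W j * (M *ᵥ W) j)
      (fun j hj => by show W j * (M *ᵥ W) j = 0; rw [hWoff j hj, zero_mul])]
    apply Finset.sum_congr rfl
    intro j _
    rw [hWS j, hMW j.1]
    rfl
  rw [← key]
  exact hmain
/-- Theorem 3.9 (second part): if moreover the smallest eigenvalue of `Q_SS` is
simple, then the normalized steps `(x^{k+1} − x^k)|_S / ‖(x^{k+1} − x^k)|_S‖`
converge to `±v̄_s`. -/
theorem ppa_normalized_steps_tendsto_eigenvector {n : ℕ} (hn : 1 ≤ n)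
    (l u : Fin n → EReal)
    (hl : ∀ j, l j ≠ ⊤) (hu : ∀ j, u j ≠ ⊥) (hlu : ∀ j, l j < u j)
    (Q : Matrix (Fin n) (Fin n) ℝ) (hQ : Q.IsSymm) (r : Fin n → ℝ)
    (γ : ℝ) (hγ : 0 < γ)
    (hpd : (Q + γ • (1 : Matrix (Fin n) (Fin n) ℝ)).PosDef)
    (hbdd : ∃ B : ℝ, ∀ z, inBox l u z → B ≤ qf Q r z)
    (x : ℕ → Fin n → ℝ) (hmem : ∀ k, inBox l u (x k))
    (hppa : ∀ k, ∀ z, inBox l u z →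
      qf Q r (x (k + 1)) + γ / 2 * vnorm (x (k + 1) - x k) ^ 2 ≤
        qf Q r z + γ / 2 * vnorm (z - x k) ^ 2)
    (xbar : Fin n → ℝ) (hxbar : inBox l u xbar)
    (hconv : Tendsto x atTop (𝓝 xbar))
    (hkkt : kktStrict l u Q r xbar)
    (S : Finset (Fin n))
    (hS : ∀ j, j ∈ S ↔ (l j < (xbar j : EReal) ∧ (xbar j : EReal) < u j))
    (hcard : 0 < S.card)
    (lam : Fin S.card → ℝ) (v : Fin S.card → {j // j ∈ S} → ℝ)
    (hdec : ∀ i i' : Fin S.card, i ≤ i' → lam i' ≤ lam i)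
    (heig : ∀ i, (Q.submatrix (Subtype.val : {j // j ∈ S} → Fin n)
      Subtype.val) *ᵥ v i = lam i • v i)
    (hortho : ∀ i i', v i ⬝ᵥ v i' = if i = i' then (1 : ℝ) else 0)
    (N : ℕ)
    (hN : ∀ k, N ≤ k → ∀ j,
      ((x k j : EReal) = l j ↔ (xbar j : EReal) = l j) ∧
      ((x k j : EReal) = u j ↔ (xbar j : EReal) = u j))
    (hne : v ⟨S.card - 1, Nat.sub_lt hcard Nat.one_pos⟩ ⬝ᵥ
      (fun j : {j // j ∈ S} => x (N + 1) j - x N j) ≠ 0)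
    (hcard2 : 1 < S.card)
    (hsimple : lam ⟨S.card - 1, Nat.sub_lt hcard Nat.one_pos⟩ <
      lam ⟨S.card - 2, by omega⟩) :
    (∀ k, N ≤ k → (fun j : {j // j ∈ S} => x (k + 1) j - x k j) ≠ 0) ∧
    ∃ σ : ℝ, (σ = 1 ∨ σ = -1) ∧
      Tendsto (fun k =>
          (vnorm fun j : {j // j ∈ S} => x (k + 1) j - x k j)⁻¹ •
            fun j : {j // j ∈ S} => x (k + 1) j - x k j) atTop
        (𝓝 (σ • v ⟨S.card - 1, Nat.sub_lt hcard Nat.one_pos⟩)) := by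
  classical
  set QS : Matrix {j // j ∈ S} {j // j ∈ S} ℝ :=
    Q.submatrix (Subtype.val : {j // j ∈ S} → Fin n) Subtype.val with hQSdef
  have hQS : QS.IsSymm := hQ.submatrix _
  set s : Fin S.card := ⟨S.card - 1, Nat.sub_lt hcard Nat.one_pos⟩ with hsdef
  -- step vectors restricted to S
  set d : ℕ → {j // j ∈ S} → ℝ := fun k j => x (k + 1) j.1 - x k j.1 with hddef
  -- interiority of iterates on S
  have hint : ∀ k, N ≤ k → ∀ j, j ∈ S →
      l j < ((x k j : ℝ) : EReal) ∧ ((x k j : ℝ) : EReal) < u j := by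
    intro k hk j hj
    obtain ⟨hl1, hu1⟩ := (hS j).mp hj
    constructor
    · refine lt_of_le_of_ne (hmem k j).1 (fun h => ?_)
      exact absurd ((hN k hk j).1.mp h.symm) hl1.ne'
    · refine lt_of_le_of_ne (hmem k j).2 (fun h => ?_)
      exact absurd ((hN k hk j).2.mp h) hu1.ne
  -- stationarity on S
  have hstat : ∀ k, N ≤ k → ∀ j, j ∈ S →
      (Q *ᵥ x (k+1)) j + r j + γ * (x (k+1) j - x k j) = 0 := by
    intro k hk j hj
    have hk1 : N ≤ k + 1 := le_trans hk (Nat.le_succ k)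
    obtain ⟨hxl, hxu⟩ := hint (k+1) hk1 j hj
    obtain ⟨δ1, hδ1, hδ1'⟩ := ereal_lt_nbhd_lower (l j) (x (k+1) j) hxl
    obtain ⟨δ2, hδ2, hδ2'⟩ := ereal_lt_nbhd_upper (u j) (x (k+1) j) hxu
    apply lin_quad_zero _ (Q j j / 2 + γ / 2) (min δ1 δ2) (lt_min hδ1 hδ2)
    intro t ht
    have htδ1 : |t| < δ1 := lt_of_lt_of_le ht (min_le_left _ _)
    have htδ2 : |t| < δ2 := lt_of_lt_of_le ht (min_le_right _ _)
    have habs : |(x (k+1) j + t) - x (k+1) j| = |t| := by ring_nf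
    have hzbox : inBox l u (x (k+1) + t • (Pi.single j 1 : Fin n → ℝ)) := by
      intro j'
      by_cases hjj : j' = j
      · subst hjj
        have hzj : (x (k+1) + t • (Pi.single j' 1 : Fin n → ℝ)) j' = x (k+1) j' + t := by
          simp
        rw [hzj]
        constructor
        · exact le_of_lt (hδ1' _ (by rw [habs]; exact htδ1))
        · exact le_of_lt (hδ2' _ (by rw [habs]; exact htδ2))
      · have hzj : (x (k+1) + t • (Pi.single j 1 : Fin n → ℝ)) j' = x (k+1) j' := by
          simp [Pi.single_eq_of_ne hjj]
        rw [hzj]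
        exact hmem (k+1) j'
    have hineq := hppa k _ hzbox
    rw [vnorm_sq, vnorm_sq] at hineq
    have hq := qf_expand Q hQ r (x (k+1)) j t
    have hsub : x (k+1) + t • (Pi.single j 1 : Fin n → ℝ) - x k =
        (x (k+1) - x k) + t • (Pi.single j 1 : Fin n → ℝ) := by
      ext j'; simp; ring
    have hdot : (x (k+1) + t • (Pi.single j 1 : Fin n → ℝ) - x k) ⬝ᵥ
        (x (k+1) + t • (Pi.single j 1 : Fin n → ℝ) - x k) =
        (x (k+1) - x k) ⬝ᵥ (x (k+1) - x k) + 2 * t * (x (k+1) j - x k j) + t ^ 2 := by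
      rw [hsub, dot_expand]
      rfl
    rw [hq, hdot] at hineq
    nlinarith [hineq]
  -- constancy off S
  have hconst : ∀ k, N ≤ k → ∀ j, j ∉ S → x k j = xbar j := by
    intro k hk j hj
    have hns := (hS j).not.mp hj
    rcases not_and_or.mp hns with h | h
    · have heq : (xbar j : EReal) = l j := le_antisymm (not_lt.mp h) (hxbar j).1
      have := (hN k hk j).1.mpr heq
      have : ((x k j : ℝ) : EReal) = ((xbar j : ℝ) : EReal) := by rw [this, heq]
      exact_mod_cast this
    · have heq : (xbar j : EReal) = u j := le_antisymm (hxbar j).2 (not_lt.mp h)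
      have := (hN k hk j).2.mpr heq
      have : ((x k j : ℝ) : EReal) = ((xbar j : ℝ) : EReal) := by rw [this, heq]
      exact_mod_cast this
  have hDoff : ∀ k, N ≤ k → ∀ j, j ∉ S → x (k+1) j - x k j = 0 := by
    intro k hk j hj
    rw [hconst k hk j hj, hconst (k+1) (le_trans hk (Nat.le_succ k)) j hj, sub_self]
  -- coordinate recursion
  have hrec : ∀ (i : Fin S.card) (k : ℕ), N ≤ k →
      (lam i + γ) * (v i ⬝ᵥ d (k+1)) = γ * (v i ⬝ᵥ d k) := by
    intro i k hk
    have hvec : QS *ᵥ d (k+1) + γ • d (k+1) = γ • d k := by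
      funext j
      have h1 := hstat (k+1) (le_trans hk (Nat.le_succ k)) j.1 j.2
      have h2 := hstat k hk j.1 j.2
      have h3 : (QS *ᵥ d (k+1)) j = (Q *ᵥ x (k+2)) j.1 - (Q *ᵥ x (k+1)) j.1 := by
        show ∑ i : {i // i ∈ S}, Q j.1 i.1 * (x (k+2) i.1 - x (k+1) i.1) = _
        rw [← sum_restrict S (fun i => Q j.1 i * (x (k+2) i - x (k+1) i))
          (fun i hi => by
            show Q j.1 i * (x (k+2) i - x (k+1) i) = 0
            rw [hDoff (k+1) (le_trans hk (Nat.le_succ k)) i hi, mul_zero])]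
        show ∑ i, Q j.1 i * (x (k+2) i - x (k+1) i) =
          (∑ i, Q j.1 i * x (k+2) i) - ∑ i, Q j.1 i * x (k+1) i
        rw [← Finset.sum_sub_distrib]
        exact Finset.sum_congr rfl fun i _ => by ring
      show (QS *ᵥ d (k+1)) j + γ * d (k+1) j = γ * d k j
      rw [h3]
      show _ + γ * (x (k+2) j.1 - x (k+1) j.1) = γ * (x (k+1) j.1 - x k j.1)
      linarith [h1, h2]
    have hdotv := congrArg (fun w => v i ⬝ᵥ w) hvec
    simp only [dotProduct_add, dotProduct_smul, smul_eq_mul] at hdotv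
    have hsym : v i ⬝ᵥ (QS *ᵥ d (k+1)) = lam i * (v i ⬝ᵥ d (k+1)) := by
      rw [dot_symm' QS hQS, heig i, dotProduct_smul, smul_eq_mul, dotProduct_comm]
    rw [hsym] at hdotv
    linarith [hdotv]
  -- positivity of lam i + γ
  have hvne : ∀ i, v i ≠ 0 := by
    intro i h
    have := hortho i i
    rw [h] at this
    simp at this
  have hpos : ∀ i, 0 < lam i + γ := by
    intro i
    have h := quad_restrict_pos S (Q + γ • (1 : Matrix (Fin n) (Fin n) ℝ)) hpd (v i) (hvne i)
    have hsub1 : (Q + γ • (1 : Matrix (Fin n) (Fin n) ℝ)).submatrix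
        (Subtype.val : {j // j ∈ S} → Fin n) Subtype.val =
        QS + γ • (1 : Matrix {j // j ∈ S} {j // j ∈ S} ℝ) := by
      ext a b
      simp only [Matrix.submatrix_apply, Matrix.add_apply, Matrix.smul_apply, Matrix.one_apply,
        smul_eq_mul, hQSdef]
      congr 1
      simp [Subtype.val_injective.eq_iff]
    rw [hsub1, add_mulVec, smul_mulVec, one_mulVec] at h
    rw [heig i, dotProduct_add, dotProduct_smul, dotProduct_smul, smul_eq_mul, smul_eq_mul,
      hortho i i] at h
    simpa using h
  -- the ratios
  set μ : Fin S.card → ℝ := fun i => γ / (lam i + γ) with hμdef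
  have hμpos : ∀ i, 0 < μ i := fun i => div_pos hγ (hpos i)
  have hstep : ∀ (i : Fin S.card) (k : ℕ), N ≤ k →
      v i ⬝ᵥ d (k+1) = μ i * (v i ⬝ᵥ d k) := by
    intro i k hk
    have h := hrec i k hk
    show v i ⬝ᵥ d (k+1) = γ / (lam i + γ) * (v i ⬝ᵥ d k)
    rw [div_mul_eq_mul_div, eq_div_iff (hpos i).ne']
    linarith [h]
  set c : Fin S.card → ℝ := fun i => v i ⬝ᵥ d N with hcdef
  have hcoord : ∀ (i : Fin S.card) (m : ℕ), v i ⬝ᵥ d (N+m) = μ i ^ m * c i := by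
    intro i m
    induction m with
    | zero => simp [hcdef]
    | succ m ih =>
        have : N + (m + 1) = (N + m) + 1 := by omega
        rw [this, hstep i (N+m) (Nat.le_add_right N m), ih]
        ring
  have hcs : c s ≠ 0 := hne
  -- part 1: nonvanishing
  have hdnz : ∀ k, N ≤ k → d k ≠ 0 := by
    intro k hk h0
    obtain ⟨m, rfl⟩ := Nat.exists_eq_add_of_le hk
    have := hcoord s m
    rw [h0, dotProduct_zero] at this
    exact hcs (by
      have hμm : (0:ℝ) < μ s ^ m := pow_pos (hμpos s) m
      have := this.symm
      rcases mul_eq_zero.mp this with h | h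
      · exact absurd h (ne_of_gt hμm)
      · exact h)
  -- expansion in the eigenbasis
  have hscard : Nonempty (Fin S.card) := ⟨s⟩
  have hcardeq : Fintype.card (Fin S.card) = Fintype.card {j // j ∈ S} := by
    simp [Fintype.card_coe]
  have hexp : ∀ w : {j // j ∈ S} → ℝ, w = ∑ i, (v i ⬝ᵥ w) • v i :=
    ortho_expand v hortho hcardeq
  have hdm : ∀ m, d (N+m) = ∑ i, (μ i ^ m * c i) • v i := by
    intro m
    exact (hexp (d (N+m))).trans (Finset.sum_congr rfl fun i _ => by rw [hcoord i m])
  -- ratio bounds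
  set ρ : Fin S.card → ℝ := fun i => μ i / μ s with hρdef
  have hρs : ρ s = 1 := div_self (ne_of_gt (hμpos s))
  have hμlt : ∀ i, i ≠ s → μ i < μ s := by
    intro i hi
    set s2 : Fin S.card := ⟨S.card - 2, by omega⟩ with hs2def
    have his2 : i ≤ s2 := by
      have hiv : i.1 < S.card := i.2
      have hivne : i.1 ≠ S.card - 1 := fun h => hi (Fin.ext h)
      exact Fin.le_def.mpr (show i.1 ≤ S.card - 2 by omega)
    have hlam : lam s < lam i := lt_of_lt_of_le hsimple (hdec i s2 his2)
    rw [hμdef]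
    apply div_lt_div_of_pos_left hγ (hpos s)
    linarith
  have hρlt : ∀ i, i ≠ s → 0 ≤ ρ i ∧ ρ i < 1 := by
    intro i hi
    constructor
    · exact le_of_lt (div_pos (hμpos i) (hμpos s))
    · rw [hρdef, div_lt_one (hμpos s)]
      exact hμlt i hi
  -- rescaled steps
  set w : ℕ → {j // j ∈ S} → ℝ := fun m => ∑ i, (ρ i ^ m * c i) • v i with hwdef
  have hdw : ∀ m, d (N+m) = (μ s ^ m) • w m := by
    intro m
    rw [hdm m, hwdef, Finset.smul_sum]
    apply Finset.sum_congr rfl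
    intro i _
    rw [smul_smul]
    congr 1
    have hs0 : (μ s) ^ m ≠ 0 := pow_ne_zero m (hμpos s).ne'
    rw [hρdef, div_pow]
    rw [← div_pow]
    show μ i ^ m * c i = μ s ^ m * ((μ i / μ s) ^ m * c i)
    clear_value μ
    rw [div_pow, div_mul_eq_mul_div, mul_div_assoc', mul_div_cancel_left₀ _ hs0]
  -- limits
  refine ⟨fun k hk => hdnz k hk, ?_⟩
  have hlimw : Tendsto w atTop (𝓝 (c s • v s)) := by
    have h1 : ∀ i : Fin S.card, Tendsto (fun m => (ρ i ^ m * c i) • v i) atTop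
        (𝓝 (if i = s then c s • v s else 0)) := by
      intro i
      by_cases hi : i = s
      · subst hi
        rw [if_pos rfl]
        simp only [hρs, one_pow, one_mul]
        exact tendsto_const_nhds
      · rw [if_neg hi]
        obtain ⟨hρ0, hρ1⟩ := hρlt i hi
        have h2 := (tendsto_pow_atTop_nhds_zero_of_lt_one hρ0 hρ1).mul_const (c i)
        rw [zero_mul] at h2
        have h3 := h2.smul_const (v i)
        rwa [zero_smul] at h3
    have h2 := tendsto_finset_sum Finset.univ (fun i (_ : i ∈ Finset.univ) => h1 i)
    have h3 : (∑ i, if i = s then c s • v s else (0 : {j // j ∈ S} → ℝ)) = c s • v s := by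
      rw [Finset.sum_ite_eq' Finset.univ s (fun _ => c s • v s)]
      simp
    rw [h3] at h2
    exact h2
  have hlimn : Tendsto (fun m => vnorm (w m)) atTop (𝓝 (vnorm (c s • v s))) :=
    (vnorm_continuous.tendsto _).comp hlimw
  have hvns : vnorm (c s • v s) = |c s| := by
    rw [vnorm_smul_abs]
    have hv1 : vnorm (v s) = 1 := by
      rw [vnorm, hortho s s]
      simp
    rw [hv1, mul_one]
  have habs0 : |c s| ≠ 0 := abs_ne_zero.mpr hcs
  have hlimninv : Tendsto (fun m => (vnorm (w m))⁻¹) atTop (𝓝 (|c s|)⁻¹) := by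
    rw [← hvns]
    exact hlimn.inv₀ (by rw [hvns]; exact habs0)
  have hlim2 : Tendsto (fun m => (vnorm (w m))⁻¹ • w m) atTop
      (𝓝 ((|c s|)⁻¹ • (c s • v s))) := hlimninv.smul hlimw
  refine ⟨|c s|⁻¹ * c s, ?_, ?_⟩
  · rcases lt_or_gt_of_ne hcs with h | h
    · right; rw [abs_of_neg h]; field_simp
    · left; rw [abs_of_pos h]; field_simp
  · have hlim3 : Tendsto (fun m => (vnorm (w m))⁻¹ • w m) atTop
        (𝓝 ((|c s|⁻¹ * c s) • v s)) := by
      rwa [smul_smul] at hlim2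
    have heqm : ∀ m, (vnorm (d (N+m)))⁻¹ • d (N+m) = (vnorm (w m))⁻¹ • w m := by
      intro m
      rw [hdw m]
      exact normalize_smul_pos _ (pow_pos (hμpos s) m) _
    have hlim4 : Tendsto (fun m => (vnorm (d (N+m)))⁻¹ • d (N+m)) atTop
        (𝓝 ((|c s|⁻¹ * c s) • v s)) := hlim3.congr (fun m => (heqm m).symm)
    have hlim5 : Tendsto (fun k => (vnorm (d k))⁻¹ • d k) atTop
        (𝓝 ((|c s|⁻¹ * c s) • v s)) := by
      rw [show (fun m => (vnorm (d (N+m)))⁻¹ • d (N+m)) =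
          (fun m => (fun k => (vnorm (d k))⁻¹ • d k) (m + N)) from
        funext (fun m => by rw [Nat.add_comm])] at hlim4
      exact (tendsto_add_atTop_iff_nat N).mp hlim4
    exact hlim5
end

section
/- Let H be an n×n real symmetric matrix, f, w ∈ ℝⁿ, l, u ∈ ℝⁿ with l_j < u_j for all j, let a < b be reals, and let z : ℝ → ℝⁿ. Assume the nondegeneracy condition (Assumption 4.1): there is no index j and no nonempty open subinterval (a′,b′) ⊆ (a,b) such that (z_j(t) = l_j or z_j(t) = u_j) and H_jᵀz(t) + f_j + t·w_j = 0 for all t ∈ (a′,b′), where H_j is the j-th column of H. Suppose (S_l, S_m, S_u) and (B_l, B_m, B_u) are two partitions of {1,…,n} each satisfying, for every t ∈ (a,b): for j in the middle class, l_j ≤ z_j(t) ≤ u_j and H_jᵀz(t) + f_j + t·w_j = 0; for j in the lower class, z_j(t) = l_j and H_jᵀz(t) + f_j + t·w_j ≥ 0; for j in the upper class, z_j(t) = u_j and H_jᵀz(t) + f_j + t·w_j ≤ 0. Then the two partitions coincide: S_l = B_l, S_m = B_m and S_u = B_u. (Theorem 4.2: uniqueness of the active-set classification along the parametric solution path.)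 -/
open Matrix Filter Topology

/-- Theorem 4.2: under the nondegeneracy Assumption 4.1, the active-set
classification `(S_l, S_m, S_u)` satisfying the parametric optimality conditions
on an interval `(a,b)` is unique. -/
theorem parametric_active_set_classification_unique {n : ℕ}
    (H : Matrix (Fin n) (Fin n) ℝ) (hH : H.IsSymm)
    (f w l u : Fin n → ℝ) (hlu : ∀ j, l j < u j)
    (a b : ℝ) (hab : a < b) (z : ℝ → Fin n → ℝ)
    (hnd : ¬ ∃ j : Fin n, ∃ a' b' : ℝ, a ≤ a' ∧ a' < b' ∧ b' ≤ b ∧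
      ∀ t ∈ Set.Ioo a' b',
        (z t j = l j ∨ z t j = u j) ∧ (H *ᵥ z t) j + f j + t * w j = 0)
    (Sl Sm Su Bl Bm Bu : Set (Fin n))
    (hSpart : ∀ j, (j ∈ Sl ∧ j ∉ Sm ∧ j ∉ Su) ∨ (j ∉ Sl ∧ j ∈ Sm ∧ j ∉ Su) ∨
      (j ∉ Sl ∧ j ∉ Sm ∧ j ∈ Su))
    (hBpart : ∀ j, (j ∈ Bl ∧ j ∉ Bm ∧ j ∉ Bu) ∨ (j ∉ Bl ∧ j ∈ Bm ∧ j ∉ Bu) ∨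
      (j ∉ Bl ∧ j ∉ Bm ∧ j ∈ Bu))
    (hSsol : ∀ t ∈ Set.Ioo a b,
      (∀ j ∈ Sm, (l j ≤ z t j ∧ z t j ≤ u j) ∧ (H *ᵥ z t) j + f j + t * w j = 0) ∧
      (∀ j ∈ Sl, z t j = l j ∧ 0 ≤ (H *ᵥ z t) j + f j + t * w j) ∧
      (∀ j ∈ Su, z t j = u j ∧ (H *ᵥ z t) j + f j + t * w j ≤ 0))
    (hBsol : ∀ t ∈ Set.Ioo a b,
      (∀ j ∈ Bm, (l j ≤ z t j ∧ z t j ≤ u j) ∧ (H *ᵥ z t) j + f j + t * w j = 0) ∧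
      (∀ j ∈ Bl, z t j = l j ∧ 0 ≤ (H *ᵥ z t) j + f j + t * w j) ∧
      (∀ j ∈ Bu, z t j = u j ∧ (H *ᵥ z t) j + f j + t * w j ≤ 0)) :
    Sl = Bl ∧ Sm = Bm ∧ Su = Bu := by
  have ht0 : (a+b)/2 ∈ Set.Ioo a b := ⟨by linarith, by linarith⟩
  have key : ∀ (Sl Sm Su Bl Bm Bu : Set (Fin n)),
      (∀ j, (j ∈ Bl ∧ j ∉ Bm ∧ j ∉ Bu) ∨ (j ∉ Bl ∧ j ∈ Bm ∧ j ∉ Bu) ∨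
        (j ∉ Bl ∧ j ∉ Bm ∧ j ∈ Bu)) →
      (∀ t ∈ Set.Ioo a b,
        (∀ j ∈ Sm, (l j ≤ z t j ∧ z t j ≤ u j) ∧ (H *ᵥ z t) j + f j + t * w j = 0) ∧
        (∀ j ∈ Sl, z t j = l j ∧ 0 ≤ (H *ᵥ z t) j + f j + t * w j) ∧
        (∀ j ∈ Su, z t j = u j ∧ (H *ᵥ z t) j + f j + t * w j ≤ 0)) →
      (∀ t ∈ Set.Ioo a b,
        (∀ j ∈ Bm, (l j ≤ z t j ∧ z t j ≤ u j) ∧ (H *ᵥ z t) j + f j + t * w j = 0) ∧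
        (∀ j ∈ Bl, z t j = l j ∧ 0 ≤ (H *ᵥ z t) j + f j + t * w j) ∧
        (∀ j ∈ Bu, z t j = u j ∧ (H *ᵥ z t) j + f j + t * w j ≤ 0)) →
      Sl ⊆ Bl ∧ Sm ⊆ Bm ∧ Su ⊆ Bu := by
    intro Sl Sm Su Bl Bm Bu hBpart hSsol hBsol
    refine ⟨?_, ?_, ?_⟩
    · intro j hj
      rcases hBpart j with ⟨h, _, _⟩ | ⟨_, h, _⟩ | ⟨_, _, h⟩
      · exact h
      · exact absurd ⟨j, a, b, le_refl a, hab, le_refl b, fun t ht =>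
          ⟨Or.inl ((hSsol t ht).2.1 j hj).1, ((hBsol t ht).1 j h).2⟩⟩ hnd
      · have h1 := ((hSsol _ ht0).2.1 j hj).1
        have h2 := ((hBsol _ ht0).2.2 j h).1
        have := hlu j
        exact absurd (h1 ▸ h2) (by linarith)
    · intro j hj
      rcases hBpart j with ⟨h, _, _⟩ | ⟨_, h, _⟩ | ⟨_, _, h⟩
      · exact absurd ⟨j, a, b, le_refl a, hab, le_refl b, fun t ht =>
          ⟨Or.inl ((hBsol t ht).2.1 j h).1, ((hSsol t ht).1 j hj).2⟩⟩ hnd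
      · exact h
      · exact absurd ⟨j, a, b, le_refl a, hab, le_refl b, fun t ht =>
          ⟨Or.inr ((hBsol t ht).2.2 j h).1, ((hSsol t ht).1 j hj).2⟩⟩ hnd
    · intro j hj
      rcases hBpart j with ⟨h, _, _⟩ | ⟨_, h, _⟩ | ⟨_, _, h⟩
      · have h1 := ((hSsol _ ht0).2.2 j hj).1
        have h2 := ((hBsol _ ht0).2.1 j h).1
        have := hlu j
        exact absurd (h1 ▸ h2) (by linarith)
      · exact absurd ⟨j, a, b, le_refl a, hab, le_refl b, fun t ht =>
          ⟨Or.inr ((hSsol t ht).2.2 j hj).1, ((hBsol t ht).1 j h).2⟩⟩ hnd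
      · exact h
  obtain ⟨h1, h2, h3⟩ := key Sl Sm Su Bl Bm Bu hBpart hSsol hBsol
  obtain ⟨h4, h5, h6⟩ := key Bl Bm Bu Sl Sm Su hSpart hBsol hSsol
  exact ⟨Set.Subset.antisymm h1 h4, Set.Subset.antisymm h2 h5, Set.Subset.antisymm h3 h6⟩
end

section
/- Let S be an s×s real symmetric matrix and γ > 0 such that S + γI is positive definite, and set M = γ(S + γI)^{−1}. Let v ∈ ℝˢ and u = Mv. If uᵀSu ≥ 0, then ‖u‖ ≤ ‖v‖; i.e. the proximal linear iteration does not increase the distance whenever the objective-decrease term is nonnegative. (The inequality ‖x^N − x̄‖² − ‖x^{N+1} − x̄‖² ≥ 0 established in the proof of Theorem 3.6, in matrix form.) -/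
open Matrix Filter Topology

/-- The proximal linear iteration `u = M v` with `M = γ(S + γI)⁻¹` does not
increase the Euclidean norm whenever `uᵀSu ≥ 0` (inequality from the proof of
Theorem 3.6). -/
theorem prox_linear_iteration_nonexpansive {s : ℕ}
    (S : Matrix (Fin s) (Fin s) ℝ) (hS : S.IsSymm)
    (γ : ℝ) (hγ : 0 < γ)
    (hpd : (S + γ • (1 : Matrix (Fin s) (Fin s) ℝ)).PosDef)
    (v uvec : Fin s → ℝ)
    (huvec : uvec = γ • ((S + γ • (1 : Matrix (Fin s) (Fin s) ℝ))⁻¹ *ᵥ v))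
    (hcurv : 0 ≤ uvec ⬝ᵥ S *ᵥ uvec) :
    vnorm uvec ≤ vnorm v := by
  set A := S + γ • (1 : Matrix (Fin s) (Fin s) ℝ) with hA
  have hdet : IsUnit A.det := isUnit_iff_ne_zero.mpr hpd.det_pos.ne'
  have hAu : A *ᵥ uvec = γ • v := by
    rw [huvec, mulVec_smul, Matrix.mulVec_mulVec, Matrix.mul_nonsing_inv _ hdet,
      Matrix.one_mulVec]
  have hv : v = γ⁻¹ • (A *ᵥ uvec) := by
    rw [hAu, smul_smul, inv_mul_cancel₀ hγ.ne', one_smul]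
  have hAexp : A *ᵥ uvec = S *ᵥ uvec + γ • uvec := by
    rw [hA, Matrix.add_mulVec, Matrix.smul_mulVec, Matrix.one_mulVec]
  set w := S *ᵥ uvec with hw
  have hww : 0 ≤ w ⬝ᵥ w := Finset.sum_nonneg fun i _ => mul_self_nonneg _
  have hcomm : w ⬝ᵥ uvec = uvec ⬝ᵥ w := dotProduct_comm _ _
  have key : uvec ⬝ᵥ uvec ≤ v ⬝ᵥ v := by
    rw [hv, hAexp]
    rw [smul_dotProduct, dotProduct_smul, add_dotProduct, dotProduct_add, dotProduct_add,
      smul_dotProduct, smul_dotProduct, dotProduct_smul, dotProduct_smul, hcomm]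
    have hγ2 : 0 < γ * γ := mul_pos hγ hγ
    simp only [smul_eq_mul]
    rw [← mul_assoc, show γ⁻¹ * γ⁻¹ = 1 / (γ * γ) by ring, one_div_mul_eq_div]
    rw [le_div_iff₀ hγ2]
    nlinarith [hcurv, hww]
  have h0 : 0 ≤ uvec ⬝ᵥ uvec := Finset.sum_nonneg fun i _ => mul_self_nonneg _
  exact Real.sqrt_le_sqrt key
end
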